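/- Let G be a finite simple graph on p vertices with Gaussian rank r(G), and let r be an integer with r > r(G). Then for every p×p positive semidefinite matrix A of rank r that is in general position, there exists a positive definite p×p matrix P with P ≍_G A. -/

import Mathlib

open Matrix MeasureTheory

/-- Two matrices match on a graph `G`: equal diagonals and equal entries on all edges. -/
def MatchOn {V : Type*} (G : SimpleGraph V) (A B : Matrix V V ℝ) : Prop :=
  (∀ i, A i i = B i i) ∧ ∀ i j, G.Adj i j → A i j = B i j

/-- A real symmetric positive semidefinite matrix of rank `d` is in general position if
every `d × d` principal submatrix is nonsingular. -/
def InGenPos {V : Type*} [Fintype V] [DecidableEq V] (A : Matrix V V ℝ) (d : ℕ) : Prop :=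
  A.PosSemidef ∧ A.rank = d ∧
    ∀ α : Finset V, α.card = d →
      (A.submatrix (fun i : α => (i : V)) (fun i : α => (i : V))).det ≠ 0

/-- The defining property of the Gaussian rank at level `r`. -/
def GRankProp {V : Type*} [Fintype V] [DecidableEq V] (G : SimpleGraph V) (r : ℕ) : Prop :=
  ∀ A : Matrix V V ℝ, InGenPos A r → ∃ P : Matrix V V ℝ, P.PosDef ∧ MatchOn G P A

/-- The Gaussian rank of a graph. -/
noncomputable def gaussianRank {V : Type*} [Fintype V] [DecidableEq V]
    (G : SimpleGraph V) : ℕ :=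
  sInf {r : ℕ | 0 < r ∧ GRankProp G r}

/-- Vertex connectivity: the least size of a vertex set whose deletion disconnects the
graph or leaves at most one vertex. -/
noncomputable def vertexConn {V : Type*} (G : SimpleGraph V) : ℕ :=
  sInf {k : ℕ | ∃ S : Set V, S.ncard = k ∧
    (¬ (G.induce Sᶜ).Connected ∨ Sᶜ.ncard ≤ 1)}

/-- Subgraph connectivity number: the maximum vertex connectivity over all subgraphs. -/
noncomputable def subgraphConn {V : Type*} (G : SimpleGraph V) : ℕ :=
  sSup {k : ℕ | ∃ H : G.Subgraph, vertexConn H.coe = k}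

/-- Minimum degree of a graph. -/
noncomputable def minDeg {V : Type*} (G : SimpleGraph V) : ℕ :=
  sInf {k : ℕ | ∃ v, (G.neighborSet v).ncard = k}

/-- Degeneracy number: the maximum over all subgraphs of the minimum degree. -/
noncomputable def degeneracy {V : Type*} (G : SimpleGraph V) : ℕ :=
  sSup {k : ℕ | ∃ H : G.Subgraph, minDeg H.coe = k}

/-!
Write `A = ΛΛᵀ`. For `k ≤ r`, the `k × k` principal minors of `A` do not vanish, since principal
submatrices of the positive definite `r × r` ones are positive definite. For a generic
`N : Matrix n (Fin k) ℝ` the matrix `ΛN(ΛN)ᵀ` then has rank `k` and is in general position: each of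
its `k × k` principal minors is a polynomial in the entries of `N` that is nonzero at one point.
Shrinking `N` makes `A' := c • ΛN(ΛN)ᵀ` satisfy `A' ≤ A`, and if a positive definite `P` matches
`A'` on `G`, then the positive definite `P + (A - A')` matches `A`. So the defining property of the
Gaussian rank is upward closed, and it holds at `r(G)` because it holds at `p`.
-/

namespace MvPolynomial

theorem exists_forall_eval_ne_zero {R σ ι : Type*} [CommRing R] [IsDomain R] [Infinite R]
    (s : Finset ι) (P : ι → MvPolynomial σ R) (hP : ∀ i ∈ s, P i ≠ 0) :
    ∃ x : σ → R, ∀ i ∈ s, eval x (P i) ≠ 0 := by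
  have hprod : ∏ i ∈ s, P i ≠ 0 := Finset.prod_ne_zero_iff.mpr hP
  obtain ⟨x, hx⟩ : ∃ x, eval x (∏ i ∈ s, P i) ≠ 0 := by
    by_contra! h
    exact hprod (funext fun x => by simpa using h x)
  exact ⟨x, Finset.prod_ne_zero_iff.mp (by rwa [map_prod] at hx)⟩

end MvPolynomial

open scoped ComplexOrder

namespace Matrix

theorem card_le_rank_of_det_submatrix_ne_zero {K n : Type*} [Field K] [Fintype n] [DecidableEq n]
    {A : Matrix n n K} {α : Finset n}
    (h : (A.submatrix (fun i : α => (i : n)) (fun i : α => (i : n))).det ≠ 0) :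
    α.card ≤ A.rank :=
  calc α.card = (A.submatrix (fun i : α => (i : n)) (fun i : α => (i : n))).rank := by
        rw [rank_of_isUnit _ ((isUnit_iff_isUnit_det _).mpr h.isUnit), Fintype.card_coe]
    _ ≤ A.rank := rank_submatrix_le _ _ _

theorem PosSemidef.det_submatrix_ne_zero_of_subset {𝕜 n : Type*} [RCLike 𝕜] [DecidableEq n]
    {A : Matrix n n 𝕜} (hA : A.PosSemidef) {α β : Finset n} (hαβ : α ⊆ β)
    (hβ : (A.submatrix (fun i : β => (i : n)) (fun i : β => (i : n))).det ≠ 0) :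
    (A.submatrix (fun i : α => (i : n)) (fun i : α => (i : n))).det ≠ 0 := by
  have hβpd := ((hA.submatrix _).posDef_iff_det_ne_zero).mpr hβ
  have hαpd := hβpd.submatrix (e := fun i : α => (⟨i, hαβ i.2⟩ : β))
    fun i j hij => Subtype.ext (congrArg Subtype.val hij :)
  rw [submatrix_submatrix] at hαpd
  exact ((hA.submatrix _).posDef_iff_det_ne_zero).mp hαpd

theorem exists_forall_det_submatrix_mul_transpose_ne_zero {K n m : Type*} [Field K] [Infinite K]
    [Fintype n] [DecidableEq n] [Fintype m] (Λ : Matrix n m K) (k : ℕ)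
    (h : ∀ α : Finset n, α.card = k →
      ((Λ * Λᵀ).submatrix (fun i : α => (i : n)) (fun i : α => (i : n))).det ≠ 0) :
    ∃ N : Matrix m (Fin k) K, ∀ α : Finset n, α.card = k →
      ((Λ * N * (Λ * N)ᵀ).submatrix (fun i : α => (i : n)) (fun i : α => (i : n))).det ≠ 0 := by
  set X := mvPolynomialX m (Fin k) K
  set Λc := Λ.map (MvPolynomial.C : K →+* MvPolynomial (m × Fin k) K)
  set Q : Finset n → MvPolynomial (m × Fin k) K := fun α =>
    ((Λc * X * (Λc * X)ᵀ).submatrix (fun i : α => (i : n)) (fun i : α => (i : n))).det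
  have eval_Q (N : Matrix m (Fin k) K) (α : Finset n) :
      MvPolynomial.eval (fun p => N p.1 p.2) (Q α) =
        ((Λ * N * (Λ * N)ᵀ).submatrix (fun i : α => (i : n)) (fun i : α => (i : n))).det := by
    have hX : X.map (MvPolynomial.eval fun p => N p.1 p.2) = N := mvPolynomialX_map_eval₂ _ N
    have hΛ : Λc.map (MvPolynomial.eval fun p => N p.1 p.2) = Λ := by ext; simp [Λc]
    rw [RingHom.map_det, RingHom.mapMatrix_apply, ← submatrix_map, Matrix.map_mul, Matrix.map_mul,
      transpose_map, Matrix.map_mul, hX, hΛ]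
  -- At `N = Λᵀ` restricted to the columns in `α`, the minor `Q α` is `det ((ΛΛᵀ)_αα) ^ 2`.
  have Q_ne_zero (α : Finset n) (hα : α.card = k) : Q α ≠ 0 := by
    let e : α ≃ Fin k := Fintype.equivFinOfCardEq (by rw [Fintype.card_coe, hα])
    set B := (Λ * Λᵀ).submatrix (fun i : α => (i : n)) (fun i : α => (i : n))
    have hB : (Λ * (Λᵀ.submatrix id (fun j => (e.symm j : n))) *
        (Λ * (Λᵀ.submatrix id (fun j => (e.symm j : n))))ᵀ).submatrix
          (fun i : α => (i : n)) (fun i : α => (i : n)) = B * Bᵀ := by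
      have hBB := submatrix_mul_equiv B Bᵀ id e.symm id
      rw [submatrix_id_id] at hBB
      rw [← hBB]
      ext i j; simp [B, mul_apply]
    intro hQ
    have := eval_Q (Λᵀ.submatrix id (fun j => (e.symm j : n))) α
    rw [hQ, map_zero, hB, det_mul, det_transpose] at this
    exact mul_ne_zero (h α hα) (h α hα) this.symm
  obtain ⟨x, hx⟩ := MvPolynomial.exists_forall_eval_ne_zero
    (Finset.univ.powersetCard k) Q fun α hα => Q_ne_zero α (Finset.mem_powersetCard.mp hα).2
  refine ⟨of fun i j => x (i, j), fun α hα => ?_⟩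
  rw [← eval_Q]
  exact hx α (Finset.mem_powersetCard.mpr ⟨Finset.subset_univ α, hα⟩)

theorem dotProduct_mulVec_transpose_self_le {n m : Type*} [Fintype n] [Fintype m]
    (N : Matrix n m ℝ) (x : n → ℝ) :
    (Nᵀ *ᵥ x) ⬝ᵥ (Nᵀ *ᵥ x) ≤ (∑ i, ∑ j, N i j ^ 2) * (x ⬝ᵥ x) := by
  calc (Nᵀ *ᵥ x) ⬝ᵥ (Nᵀ *ᵥ x) = ∑ j, (∑ i, N i j * x i) ^ 2 := by
        simp [dotProduct, mulVec, sq]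
    _ ≤ ∑ j, (∑ i, N i j ^ 2) * ∑ i, x i ^ 2 :=
        Finset.sum_le_sum fun j _ => Finset.sum_mul_sq_le_sq_mul_sq _ _ _
    _ = (∑ i, ∑ j, N i j ^ 2) * (x ⬝ᵥ x) := by
        rw [← Finset.sum_mul, Finset.sum_comm]; simp [dotProduct, sq]

theorem posSemidef_one_sub_smul_mul_transpose {n m : Type*} [Fintype n] [DecidableEq n]
    [Fintype m] (N : Matrix n m ℝ) {c : ℝ} (hc : 0 ≤ c) (hcN : c * ∑ i, ∑ j, N i j ^ 2 ≤ 1) :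
    (1 - c • (N * Nᵀ)).PosSemidef := by
  refine .of_dotProduct_mulVec_nonneg ?_ fun x => ?_
  · exact isHermitian_one.sub ((isHermitian_mul_conjTranspose_self N).smul (.all c))
  have hquad : star x ⬝ᵥ (1 - c • (N * Nᵀ)) *ᵥ x = x ⬝ᵥ x - c * ((Nᵀ *ᵥ x) ⬝ᵥ (Nᵀ *ᵥ x)) := by
    rw [star_trivial, sub_mulVec, one_mulVec, smul_mulVec, dotProduct_sub, dotProduct_smul,
      ← mulVec_mulVec, dotProduct_mulVec, ← mulVec_transpose, smul_eq_mul]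
  rw [hquad, sub_nonneg]
  calc c * ((Nᵀ *ᵥ x) ⬝ᵥ (Nᵀ *ᵥ x)) ≤ c * ((∑ i, ∑ j, N i j ^ 2) * (x ⬝ᵥ x)) :=
        mul_le_mul_of_nonneg_left (dotProduct_mulVec_transpose_self_le N x) hc
    _ ≤ x ⬝ᵥ x := by
        rw [← mul_assoc]
        exact mul_le_of_le_one_left (dotProduct_self_star_nonneg x) hcN

end Matrix

section GeneralPosition

variable {n : Type*} [Fintype n] [DecidableEq n]

theorem InGenPos.le_card {A : Matrix n n ℝ} {r : ℕ} (hA : InGenPos A r) : r ≤ Fintype.card n :=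
  hA.2.1 ▸ A.rank_le_card_width

theorem InGenPos.det_submatrix_ne_zero_of_card_le {A : Matrix n n ℝ} {r : ℕ} (hA : InGenPos A r)
    {α : Finset n} (hα : α.card ≤ r) :
    (A.submatrix (fun i : α => (i : n)) (fun i : α => (i : n))).det ≠ 0 := by
  obtain ⟨β, hαβ, hβ⟩ := Finset.exists_superset_card_eq hα hA.le_card
  exact hA.1.det_submatrix_ne_zero_of_subset hαβ (hA.2.2 β hβ)

theorem InGenPos.exists_inGenPos_posSemidef_sub {A : Matrix n n ℝ} {r k : ℕ} (hA : InGenPos A r)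
    (hkr : k ≤ r) : ∃ A' : Matrix n n ℝ, InGenPos A' k ∧ (A - A').PosSemidef := by
  obtain ⟨Λ, hAΛ⟩ : ∃ Λ : Matrix n n ℝ, A = Λ * Λᵀ := by
    open scoped MatrixOrder in
    obtain ⟨B, hB⟩ := CStarAlgebra.nonneg_iff_eq_star_mul_self.mp hA.1.nonneg
    exact ⟨Bᵀ, by rw [hB, transpose_transpose, star_eq_conjTranspose,
      conjTranspose_eq_transpose_of_trivial]⟩
  obtain ⟨N, hN⟩ := exists_forall_det_submatrix_mul_transpose_ne_zero Λ k fun α hα =>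
    hAΛ ▸ hA.det_submatrix_ne_zero_of_card_le (hα.trans_le hkr)
  set s := ∑ i, ∑ j, N i j ^ 2
  set c : ℝ := (s + 1)⁻¹
  have hc : 0 < c := by positivity
  have hcs : c * s ≤ 1 := by
    rw [inv_mul_le_iff₀ (by positivity)]
    linarith
  set C := Λ * N
  have minors (α : Finset n) (hα : α.card = k) :
      ((c • (C * Cᵀ)).submatrix (fun i : α => (i : n)) (fun i : α => (i : n))).det ≠ 0 := by
    erw [det_smul]
    exact mul_ne_zero (pow_ne_zero _ hc.ne') (hN α hα)
  refine ⟨c • (C * Cᵀ), ⟨?_, le_antisymm ?_ ?_, minors⟩, ?_⟩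
  · simpa using (posSemidef_self_mul_conjTranspose C).smul hc.le
  · calc (c • (C * Cᵀ)).rank = ((c • C) * Cᵀ).rank := by rw [smul_mul]
      _ ≤ (c • C).rank := rank_mul_le_left _ _
      _ ≤ k := by simpa using (c • C).rank_le_card_width
  · obtain ⟨α, -, hα⟩ := Finset.exists_subset_card_eq (s := Finset.univ)
      (by simpa using hkr.trans hA.le_card)
    exact hα.symm.trans_le (card_le_rank_of_det_submatrix_ne_zero (minors α hα))
  · have hD : A - c • (C * Cᵀ) = Λ * (1 - c • (N * Nᵀ)) * Λᵀ := by
      simp [hAΛ, C, Matrix.mul_sub, Matrix.sub_mul, transpose_mul, Matrix.mul_assoc]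
    rw [hD]
    simpa using (posSemidef_one_sub_smul_mul_transpose N hc.le hcs).mul_mul_conjTranspose_same Λ

end GeneralPosition

theorem MatchOn.add_sub {V : Type*} {G : SimpleGraph V} {P A A' : Matrix V V ℝ}
    (h : MatchOn G P A') : MatchOn G (P + (A - A')) A :=
  ⟨fun i => by simp [h.1 i], fun i j hij => by simp [h.2 i j hij]⟩

section GaussianRank

variable {n : Type*} [Fintype n] [DecidableEq n]

theorem GRankProp.mono {G : SimpleGraph n} {k r : ℕ} (hk : GRankProp G k) (hkr : k ≤ r) : GRankProp G r := by
  intro A hA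
  obtain ⟨A', hA', hD⟩ := hA.exists_inGenPos_posSemidef_sub hkr
  obtain ⟨P, hP, hPA'⟩ := hk A' hA'
  exact ⟨P + (A - A'), hP.add_posSemidef hD, hPA'.add_sub⟩

theorem grankProp_card (G : SimpleGraph n) : GRankProp G (Fintype.card n) := by
  intro A hA
  have hdet : A.det ≠ 0 := by
    have h := hA.2.2 Finset.univ Finset.card_univ
    rwa [show (fun i : (Finset.univ : Finset n) => (i : n)) =
      Equiv.subtypeUnivEquiv Finset.mem_univ from rfl, det_submatrix_equiv_self] at h
  exact ⟨A, hA.1.posDef_iff_det_ne_zero.mpr hdet, fun _ => rfl, fun _ _ _ => rfl⟩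

end GaussianRank

/-- If `r > r(G)`, then for every `p × p` positive semidefinite matrix `A`
of rank `r` in general position there is a positive definite `P` matching `A` on `G`. -/
theorem grankProp_of_gaussianRank_lt {p : ℕ} (G : SimpleGraph (Fin p)) (r : ℕ)
    (hr : gaussianRank G < r)
    (A : Matrix (Fin p) (Fin p) ℝ) (hA : InGenPos A r) :
    ∃ P : Matrix (Fin p) (Fin p) ℝ, P.PosDef ∧ MatchOn G P A := by
  have hp : 0 < Fintype.card (Fin p) := (Nat.zero_le _).trans_lt hr |>.trans_le hA.le_card
  have hne : {k | 0 < k ∧ GRankProp G k}.Nonempty := ⟨_, hp, grankProp_card G⟩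
  exact (Nat.sInf_mem hne).2.mono hr.le A hA
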